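/- arXiv:2304.01294 — 6 statements merged into one kernel-verified Lean document; each statement's English description precedes it below -/
import Mathlib

section
/- Let Θ ∈ R^{N×N} be symmetric positive definite with Θ^{-1} = U U^T for an upper triangular matrix U with positive diagonal, and let Y ~ N(0, Θ). Then for all indices i ≤ j, U_{ij}/U_{jj} = (-1)^{[i≠j]} · Cov[Y_i, Y_j | Y_{1:j-1 \ {i}}] / Var[Y_i | Y_{1:j-1 \ {i}}], where Y_{1:j-1 \ {i}} denotes the collection {Y_q : 1 ≤ q ≤ j-1, q ≠ i}. -/
open Matrix

/-- Conditional covariance `Cov[Y_a, Y_b | Y_s]` of a centered Gaussian vector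
`Y ~ N(0, Θ)`, given by the Schur complement
`Θ a b - Θ_{a,s} (Θ_{s,s})⁻¹ Θ_{s,b}`. -/
noncomputable def condCov {N : ℕ} (Θ : Matrix (Fin N) (Fin N) ℝ) (s : Finset (Fin N))
    (a b : Fin N) : ℝ :=
  Θ a b - ∑ p : {x // x ∈ s}, ∑ q : {x // x ∈ s},
    Θ a (p : Fin N) *
      ((Θ.submatrix (fun i : {x // x ∈ s} => (i : Fin N))
        (fun i : {x // x ∈ s} => (i : Fin N)))⁻¹ p q) * Θ (q : Fin N) b


lemma sum_mul_extend {n m : Type*} [Fintype n] [Fintype m] [DecidableEq n]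
    {e : m → n} (x : m → ℝ) (g : n → ℝ) :
    ∑ a, (∑ p, if e p = a then x p else 0) * g a = ∑ p, x p * g (e p) := by
  simp only [Finset.sum_mul, ite_mul, zero_mul]
  rw [Finset.sum_comm]
  simp [Finset.sum_ite_eq]

lemma posDef_submatrix_of_injective {n m : Type*} [Fintype n] [Fintype m]
    [DecidableEq n] [DecidableEq m] {M : Matrix n n ℝ} (hM : M.PosDef)
    {e : m → n} (he : Function.Injective e) : (M.submatrix e e).PosDef := by
  refine PosDef.of_dotProduct_mulVec_pos (hM.1.submatrix e) fun x hx => ?_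
  set y : n → ℝ := fun a => ∑ p, if e p = a then x p else 0 with hy
  have hye : ∀ p, y (e p) = x p := by
    intro p
    simp only [hy]
    rw [Finset.sum_eq_single p]
    · simp
    · intro q _ hq
      simp [he.ne hq]
    · simp
  have hy0 : y ≠ 0 := by
    intro h
    apply hx
    funext p
    have := congrFun h (e p)
    simpa [hye p] using this
  have key : star y ⬝ᵥ M *ᵥ y = star x ⬝ᵥ (M.submatrix e e) *ᵥ x := by
    simp only [dotProduct, mulVec, star_trivial, Pi.star_apply, star_trivial]
    rw [hy]
    rw [sum_mul_extend x (fun a => ∑ b, M a b * y b)]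
    refine Finset.sum_congr rfl fun p _ => ?_
    congr 1
    have : ∀ b, M (e p) b * y b = y b * M (e p) b := fun b => mul_comm _ _
    simp only [this]
    rw [hy, sum_mul_extend x (fun b => M (e p) b)]
    simp only [submatrix_apply]
    exact Finset.sum_congr rfl fun q _ => mul_comm _ _
  have h := hM.dotProduct_mulVec_pos hy0
  rw [key] at h
  exact h

lemma condCov_eq {N : ℕ} (Θ : Matrix (Fin N) (Fin N) ℝ) (s : Finset (Fin N)) (a b : Fin N) :
    condCov Θ s a b = Θ a b - ∑ p : {x // x ∈ s}, Θ a (p : Fin N) *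
      (((Θ.submatrix (fun i : {x // x ∈ s} => (i : Fin N))
        (fun i : {x // x ∈ s} => (i : Fin N)))⁻¹) *ᵥ (fun q => Θ (q : Fin N) b)) p := by
  unfold condCov
  congr 1
  refine Finset.sum_congr rfl fun p _ => ?_
  rw [mulVec, dotProduct, Finset.mul_sum]
  exact Finset.sum_congr rfl fun q _ => by ring

lemma condCov_self_pos {N : ℕ} {Θ : Matrix (Fin N) (Fin N) ℝ} (hΘ : Θ.PosDef)
    (s : Finset (Fin N)) (i : Fin N) (hi : i ∉ s) :
    0 < condCov Θ s i i := by
  classical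
  set e : {x // x ∈ s} → Fin N := fun p => (p : Fin N) with he
  have hinj : Function.Injective e := Subtype.val_injective
  set B : Matrix {x // x ∈ s} {x // x ∈ s} ℝ := Θ.submatrix e e with hB
  have hBpd : B.PosDef := posDef_submatrix_of_injective hΘ hinj
  have hBdet : IsUnit B.det := isUnit_iff_ne_zero.mpr hBpd.det_pos.ne'
  set M : Matrix {x // x ∈ s} {x // x ∈ s} ℝ := B⁻¹ with hM
  have hBM : B * M = 1 := Matrix.mul_nonsing_inv B hBdet
  set col : {x // x ∈ s} → ℝ := fun p => Θ (p : Fin N) i with hcol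
  set y : {x // x ∈ s} → ℝ := M *ᵥ col with hy
  have hBy : B *ᵥ y = col := by rw [hy, Matrix.mulVec_mulVec, hBM, Matrix.one_mulVec]
  set z : Fin N → ℝ := fun b => if b = i then 1 else if h : b ∈ s then -(y ⟨b, h⟩) else 0 with hz
  have hzi : z i = 1 := by simp [hz]
  have hz0 : z ≠ 0 := fun h => by simpa [hzi] using congrFun h i
  have hzmem : ∀ (h : (i : Fin N) ∈ insert i s), True := fun _ => trivial
  -- the split of sums over the support of z
  have hsplit : ∀ f : Fin N → ℝ, ∑ b, f b * z b
      = f i - ∑ p : {x // x ∈ s}, f (e p) * y p := by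
    intro f
    rw [← Finset.sum_subset (Finset.subset_univ (insert i s))
      (fun b _ hb => by
        have h1 : b ≠ i := fun h => hb (by simp [h])
        have h2 : b ∉ s := fun h => hb (by simp [h])
        simp [hz, h1, h2])]
    rw [Finset.sum_insert hi, hzi, mul_one]
    have : ∑ b ∈ s, f b * z b = ∑ p : {x // x ∈ s}, f (e p) * -(y p) := by
      rw [Finset.univ_eq_attach, ← Finset.sum_attach s (fun b => f b * z b)]
      refine Finset.sum_congr rfl fun p _ => ?_
      have hne : (p : Fin N) ≠ i := fun h => hi (h ▸ p.2)
      simp [hz, hne, e]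
    rw [this]
    simp [Finset.sum_neg_distrib]
    ring
  have hrow : ∀ a, (Θ *ᵥ z) a = Θ a i - ∑ p : {x // x ∈ s}, Θ a (e p) * y p := by
    intro a
    rw [mulVec, dotProduct]
    exact hsplit (fun b => Θ a b)
  have hrow0 : ∀ q : {x // x ∈ s}, (Θ *ᵥ z) (e q) = 0 := by
    intro q
    rw [hrow]
    have : ∑ p : {x // x ∈ s}, Θ (e q) (e p) * y p = (B *ᵥ y) q := by
      rw [mulVec, dotProduct]; rfl
    rw [this, hBy, hcol]
    simp [e]
  have hQF : star z ⬝ᵥ Θ *ᵥ z = condCov Θ s i i := by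
    rw [condCov_eq]
    have : star z ⬝ᵥ Θ *ᵥ z = ∑ b, (Θ *ᵥ z) b * z b := by
      rw [dotProduct]
      simp only [star_trivial, Pi.star_apply]
      exact Finset.sum_congr rfl fun b _ => mul_comm _ _
    rw [this, hsplit (fun b => (Θ *ᵥ z) b)]
    have h2 : ∑ p : {x // x ∈ s}, (Θ *ᵥ z) (e p) * y p = 0 := by
      refine Finset.sum_eq_zero fun p _ => ?_
      rw [hrow0 p, zero_mul]
    rw [h2, sub_zero, hrow i]
  have := hΘ.dotProduct_mulVec_pos hz0
  rw [hQF] at this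
  exact this

/-- If `Θ` is symmetric positive definite with `Θ⁻¹ = U Uᵀ`, `U` upper triangular with
positive diagonal, and `Y ~ N(0,Θ)`, then for `i ≤ j`,
`U i j / U j j = (-1)^{i≠j} · Cov[Y_i, Y_j | Y_{1:j-1∖{i}}] / Var[Y_i | Y_{1:j-1∖{i}}]`,
where conditional covariances of the Gaussian vector are the Schur complements above. -/
theorem stmt_3 {N : ℕ} (Θ U : Matrix (Fin N) (Fin N) ℝ) (hΘ : Θ.PosDef)
    (hupper : ∀ i j : Fin N, j < i → U i j = 0)
    (hdiag : ∀ i, 0 < U i i)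
    (hfact : Θ⁻¹ = U * Uᵀ) :
    ∀ i j : Fin N, i ≤ j →
      U i j / U j j =
        (if i = j then 1 else -1) *
          (condCov Θ (Finset.univ.filter fun q => q < j ∧ q ≠ i) i j /
           condCov Θ (Finset.univ.filter fun q => q < j ∧ q ≠ i) i i) := by
  intro i j hij
  classical
  set s : Finset (Fin N) := Finset.univ.filter fun q => q < j ∧ q ≠ i with hs
  have hmem : ∀ q : Fin N, q ∈ s ↔ q < j ∧ q ≠ i := by
    intro q; simp [hs]
  have his : i ∉ s := fun h => ((hmem i).mp h).2 rfl
  have hCii : 0 < condCov Θ s i i := condCov_self_pos hΘ s i his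
  by_cases hijeq : i = j
  · subst hijeq
    rw [if_pos rfl, div_self (hdiag i).ne', div_self hCii.ne', mul_one]
  -- now i < j
  have hlt : i < j := lt_of_le_of_ne hij hijeq
  rw [if_neg hijeq]
  -- U is invertible, triangular facts
  have htri : U.BlockTriangular id := fun a b h => hupper a b h
  have hdet : U.det = ∏ k, U k k := Matrix.det_of_upperTriangular htri
  have hUdet : IsUnit U.det := by
    rw [hdet]
    exact isUnit_iff_ne_zero.mpr (Finset.prod_ne_zero_iff.mpr fun k _ => (hdiag k).ne')
  haveI : Invertible U := U.invertibleOfIsUnitDet hUdet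
  have hinvtri : U⁻¹.BlockTriangular id := blockTriangular_inv_of_blockTriangular htri
  -- Θ * U = (Uᵀ)⁻¹
  have hΘdet : IsUnit Θ.det := isUnit_iff_ne_zero.mpr hΘ.det_pos.ne'
  have hTU : (Θ * U) * Uᵀ = 1 := by
    rw [Matrix.mul_assoc, ← hfact, Matrix.mul_nonsing_inv Θ hΘdet]
  have hTU2 : Θ * U = U⁻¹ᵀ := by
    rw [Matrix.transpose_nonsing_inv]
    exact (Matrix.inv_eq_left_inv hTU).symm
  have hrow : ∀ a, ∑ b, Θ a b * U b j = U⁻¹ j a := by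
    intro a
    have := congrFun (congrFun hTU2 a) j
    rw [Matrix.mul_apply] at this
    rw [this, Matrix.transpose_apply]
  -- diagonal of inverse
  have hinvjj : U⁻¹ j j = (U j j)⁻¹ := by
    have h1 : (U * U⁻¹) j j = 1 := by rw [Matrix.mul_nonsing_inv U hUdet]; simp
    rw [Matrix.mul_apply] at h1
    rw [Finset.sum_eq_single j] at h1
    · exact (inv_eq_of_mul_eq_one_right h1).symm
    · intro k _ hk
      rcases lt_or_gt_of_ne hk with h | h
      · rw [hupper j k h, zero_mul]
      · rw [hinvtri h, mul_zero]
    · simp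
  -- sum split
  set e : {x // x ∈ s} → Fin N := fun p => (p : Fin N) with he
  set B : Matrix {x // x ∈ s} {x // x ∈ s} ℝ := Θ.submatrix e e with hB
  have hBpd : B.PosDef := posDef_submatrix_of_injective hΘ Subtype.val_injective
  have hBdet : IsUnit B.det := isUnit_iff_ne_zero.mpr hBpd.det_pos.ne'
  set M : Matrix {x // x ∈ s} {x // x ∈ s} ℝ := B⁻¹ with hM
  have hMB : M * B = 1 := Matrix.nonsing_inv_mul B hBdet
  set coli : {x // x ∈ s} → ℝ := fun p => Θ (p : Fin N) i with hcoli
  set colj : {x // x ∈ s} → ℝ := fun p => Θ (p : Fin N) j with hcolj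
  set w : {x // x ∈ s} → ℝ := fun p => U (p : Fin N) j with hw
  have hjs : j ∉ s := fun h => absurd ((hmem j).mp h).1 (lt_irrefl j)
  have hijs : i ∉ insert j s := by
    simp only [Finset.mem_insert]
    rintro (h | h)
    · exact hijeq h
    · exact his h
  have hsplit : ∀ a, ∑ b, Θ a b * U b j
      = Θ a i * U i j + Θ a j * U j j + ∑ p : {x // x ∈ s}, Θ a (e p) * w p := by
    intro a
    rw [← Finset.sum_subset (Finset.subset_univ (insert i (insert j s)))
      (fun b _ hb => by
        simp only [Finset.mem_insert] at hb
        push_neg at hb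
        obtain ⟨h1, h2, h3⟩ := hb
        have : j < b := by
          rcases lt_trichotomy b j with h | h | h
          · exact absurd ((hmem b).mpr ⟨h, h1⟩) h3
          · exact absurd h h2
          · exact h
        rw [hupper b j this, mul_zero])]
    rw [Finset.sum_insert hijs, Finset.sum_insert hjs]
    have : ∑ b ∈ s, Θ a b * U b j = ∑ p : {x // x ∈ s}, Θ a (e p) * w p := by
      rw [Finset.univ_eq_attach, ← Finset.sum_attach s (fun b => Θ a b * U b j)]
    rw [this]
    ring
  -- rows in s
  have hBw : B *ᵥ w = fun q => -(coli q * U i j) - colj q * U j j := by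
    funext q
    have h1 := hrow (e q)
    rw [hsplit (e q)] at h1
    have h2 : U⁻¹ j (e q) = 0 := hinvtri ((hmem q).mp q.2).1
    rw [h2] at h1
    have h3 : (B *ᵥ w) q = ∑ p : {x // x ∈ s}, Θ (e q) (e p) * w p := by
      rw [Matrix.mulVec, dotProduct]; rfl
    rw [h3]
    simp only [hcoli, hcolj, he]
    linarith [h1]
  have hwval : w = -(U i j) • (M *ᵥ coli) - (U j j) • (M *ᵥ colj) := by
    have : M *ᵥ (B *ᵥ w) = w := by
      rw [Matrix.mulVec_mulVec, hMB, Matrix.one_mulVec]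
    rw [← this, hBw]
    funext q
    rw [Matrix.mulVec, dotProduct]
    simp only [Pi.sub_apply, Pi.smul_apply, Pi.neg_apply, smul_eq_mul,
      Matrix.mulVec, dotProduct, Finset.mul_sum]
    rw [← Finset.sum_sub_distrib]
    refine Finset.sum_congr rfl fun p _ => ?_
    ring
  -- row i
  have hkey : U i j * condCov Θ s i i + U j j * condCov Θ s i j = 0 := by
    have h1 := hrow i
    rw [hsplit i] at h1
    have h2 : U⁻¹ j i = 0 := hinvtri hlt
    rw [h2] at h1
    have h3 : ∑ p : {x // x ∈ s}, Θ i (e p) * w p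
        = -(U i j) * (∑ p : {x // x ∈ s}, Θ i (e p) * (M *ᵥ coli) p)
          - (U j j) * (∑ p : {x // x ∈ s}, Θ i (e p) * (M *ᵥ colj) p) := by
      rw [hwval]
      simp only [Pi.sub_apply, Pi.smul_apply, Pi.neg_apply, smul_eq_mul,
        Finset.mul_sum]
      rw [← Finset.sum_sub_distrib]
      refine Finset.sum_congr rfl fun p _ => ?_
      ring
    rw [h3] at h1
    have hci : condCov Θ s i i = Θ i i - ∑ p : {x // x ∈ s}, Θ i (e p) * (M *ᵥ coli) p :=
      condCov_eq Θ s i i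
    have hcj : condCov Θ s i j = Θ i j - ∑ p : {x // x ∈ s}, Θ i (e p) * (M *ᵥ colj) p :=
      condCov_eq Θ s i j
    rw [hci, hcj]
    linarith [h1]
  have hUjj := hdiag j
  field_simp
  linarith [hkey]
end

section
/- Let Θ ∈ R^{N×N} be symmetric positive definite and let S be an upper-triangular sparsity pattern containing all diagonal indices (j,j). Among all upper triangular matrices Û supported on S, the KL divergence KL(N(0,Θ) || N(0,(ÛÛ^T)^{-1})) is minimized column-wise by U_{s_j, j} = Θ_{s_j,s_j}^{-1} e_{#s_j} / sqrt( e_{#s_j}^T Θ_{s_j,s_j}^{-1} e_{#s_j} ), where s_j = {i : (i,j) ∈ S} and e_{#s_j} is the last standard basis vector in R^{#s_j}. -/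
open Matrix

/-- For an upper-triangular sparsity pattern `S`, `sset S j = {i : (i,j) ∈ S}` is the
sparsity set of column `j`. -/
def sset {N : ℕ} (S : Finset (Fin N × Fin N)) (j : Fin N) : Finset (Fin N) :=
  Finset.univ.filter (fun i => (i, j) ∈ S)

/-- The principal submatrix `Θ_{s_j, s_j}`. -/
def subΘ {N : ℕ} (Θ : Matrix (Fin N) (Fin N) ℝ) (S : Finset (Fin N × Fin N)) (j : Fin N) :
    Matrix {x // x ∈ sset S j} {x // x ∈ sset S j} ℝ :=
  Θ.submatrix (fun i : {x // x ∈ sset S j} => (i : Fin N))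
    (fun i : {x // x ∈ sset S j} => (i : Fin N))

/-- The standard basis vector `e_{#s_j}` of `ℝ^{s_j}` putting mass `1` on the "last"
index of `s_j`, i.e. on `j` itself (since `s_j ⊆ {1,…,j}` with `j ∈ s_j`). -/
def lastBasis {N : ℕ} (S : Finset (Fin N × Fin N)) (j : Fin N) : {x // x ∈ sset S j} → ℝ :=
  fun q => if (q : Fin N) = j then 1 else 0

/-- The KL-optimal column formula: `U_{s_j, j} = Θ_{s_j,s_j}⁻¹ e / sqrt(eᵀ Θ_{s_j,s_j}⁻¹ e)`,
and `U i j = 0` for `(i,j) ∉ S`. -/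
noncomputable def optU {N : ℕ} (Θ : Matrix (Fin N) (Fin N) ℝ) (S : Finset (Fin N × Fin N)) :
    Matrix (Fin N) (Fin N) ℝ :=
  fun i j =>
    if h : (i, j) ∈ S then
      ((subΘ Θ S j)⁻¹ *ᵥ lastBasis S j) ⟨i, Finset.mem_filter.mpr ⟨Finset.mem_univ i, h⟩⟩ /
        Real.sqrt (lastBasis S j ⬝ᵥ ((subΘ Θ S j)⁻¹ *ᵥ lastBasis S j))
    else 0

/-- The KL divergence `KL( N(0,Θ) ‖ N(0,(VVᵀ)⁻¹) ) = (1/2)[-log det(VᵀΘV) + tr(VᵀΘV) - N]`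
expressed through the factor `V`. -/
noncomputable def klObj {N : ℕ} (Θ V : Matrix (Fin N) (Fin N) ℝ) : ℝ :=
  (1 / 2) * (-Real.log ((Vᵀ * Θ * V).det) + (Vᵀ * Θ * V).trace - N)

/-! Because the factor is upper triangular, `det (VᵀΘV) = det Θ · ∏ V_jj²`, so the objective
splits into column terms `-log (v_j²) + vᵀΘv`, each depending only on the restriction of the
column `v` to `s_j`. For the positive definite block `A = Θ_{s_j,s_j}`, Cauchy–Schwarz in the
`A`-inner product against `A⁻¹ e_j` gives `v_j² ≤ (A⁻¹)_jj · vᵀAv`; with `log b ≤ b - 1` each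
column term is at least `1 - log (A⁻¹)_jj`, with equality at `v = A⁻¹ e_j / √((A⁻¹)_jj)`. -/

namespace Matrix

variable {ι : Type*} [Fintype ι]

theorem PosSemidef.dotProduct_mulVec_sq_le {A : Matrix ι ι ℝ} (hA : A.PosSemidef)
    (x y : ι → ℝ) : (x ⬝ᵥ A *ᵥ y) ^ 2 ≤ (x ⬝ᵥ A *ᵥ x) * (y ⬝ᵥ A *ᵥ y) := by
  let := A.toSeminormedAddCommGroup hA
  let := A.toInnerProductSpace hA
  have h := real_inner_mul_inner_self_le x y
  change (A *ᵥ y ⬝ᵥ star x) * (A *ᵥ y ⬝ᵥ star x) ≤ (A *ᵥ x ⬝ᵥ star x) * (A *ᵥ y ⬝ᵥ star y) at h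
  simp only [star_trivial] at h
  rw [dotProduct_comm (A *ᵥ x), dotProduct_comm (A *ᵥ y) x, dotProduct_comm (A *ᵥ y) y] at h
  nlinarith

theorem dotProduct_mulVec_eq_submatrix {A : Matrix ι ι ℝ} {s : Finset ι} {v : ι → ℝ}
    (hv : ∀ i ∉ s, v i = 0) :
    v ⬝ᵥ A *ᵥ v = (fun q : s => v q) ⬝ᵥ A.submatrix (↑) (↑) *ᵥ (fun q : s => v q) := by
  have hsupp : ∀ w : ι → ℝ, ∑ i, w i * v i = ∑ q : s, w q * v q := fun w =>
    (Fintype.sum_subset fun i hi => by_contra fun h => hi (by rw [hv i h, mul_zero])).symm.trans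
      (Finset.sum_coe_sort s _).symm
  simp only [dotProduct, mulVec, submatrix_apply, hsupp]
  simp only [mul_comm (v _), hsupp]

variable [DecidableEq ι] {A : Matrix ι ι ℝ}

theorem col_inv_dotProduct_mulVec (hA : A.IsHermitian) (hdet : IsUnit A.det) (k : ι)
    (w : ι → ℝ) : A⁻¹.col k ⬝ᵥ A *ᵥ w = w k := by
  rw [dotProduct_mulVec, ← mulVec_transpose, ← conjTranspose_eq_transpose_of_trivial, hA.eq,
    ← mulVec_single_one, mulVec_mulVec, mul_nonsing_inv A hdet, one_mulVec, single_one_dotProduct]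

theorem PosDef.sq_apply_le_inv_apply_mul (hA : A.PosDef) (k : ι) (w : ι → ℝ) :
    w k ^ 2 ≤ A⁻¹ k k * (w ⬝ᵥ A *ᵥ w) := by
  have hdet : IsUnit A.det := hA.det_pos.ne'.isUnit
  simpa [col_inv_dotProduct_mulVec hA.isHermitian hdet] using
    hA.posSemidef.dotProduct_mulVec_sq_le (A⁻¹.col k) w

end Matrix

section ColumnKL

variable {ι : Type*} [Fintype ι]

noncomputable def columnKL (A : Matrix ι ι ℝ) (k : ι) (w : ι → ℝ) : ℝ :=
  -Real.log (w k ^ 2) + w ⬝ᵥ A *ᵥ w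

theorem columnKL_eq_submatrix {A : Matrix ι ι ℝ} {s : Finset ι} {k : ι} (hk : k ∈ s)
    {w : ι → ℝ} (hw : ∀ i ∉ s, w i = 0) :
    columnKL A k w = columnKL (A.submatrix ((↑) : s → ι) (↑)) ⟨k, hk⟩ (fun q : s => w q) := by
  rw [columnKL, columnKL, dotProduct_mulVec_eq_submatrix hw]

variable [DecidableEq ι] {A : Matrix ι ι ℝ}

theorem le_columnKL (hA : A.PosDef) {k : ι} {w : ι → ℝ} (hw : w k ≠ 0) :
    1 - Real.log (A⁻¹ k k) ≤ columnKL A k w := by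
  have hc : 0 < A⁻¹ k k := hA.inv.diag_pos
  have hq : 0 < w ⬝ᵥ A *ᵥ w := by
    simpa using hA.dotProduct_mulVec_pos (x := w) fun h => hw (by simp [h])
  have hlog := Real.log_le_log (by positivity) (hA.sq_apply_le_inv_apply_mul k w)
  rw [Real.log_mul hc.ne' hq.ne'] at hlog
  have := Real.log_le_sub_one_of_pos hq
  unfold columnKL
  linarith

theorem columnKL_inv_col_div_sqrt (hA : A.PosDef) (k : ι) :
    columnKL A k (fun i => A⁻¹ i k / √(A⁻¹ k k)) = 1 - Real.log (A⁻¹ k k) := by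
  have hc : 0 < A⁻¹ k k := hA.inv.diag_pos
  have hdet : IsUnit A.det := hA.det_pos.ne'.isUnit
  have hk : (A⁻¹ k k / √(A⁻¹ k k)) ^ 2 = A⁻¹ k k := by
    rw [div_pow, Real.sq_sqrt hc.le, sq, mul_div_cancel_right₀ _ hc.ne']
  have hw : (fun i => A⁻¹ i k / √(A⁻¹ k k)) = (√(A⁻¹ k k))⁻¹ • A⁻¹.col k := by
    ext i; simp [div_eq_inv_mul]
  have hq : A⁻¹.col k ⬝ᵥ A *ᵥ A⁻¹.col k = A⁻¹ k k :=
    col_inv_dotProduct_mulVec hA.isHermitian hdet k _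
  have hq' : (fun i => A⁻¹ i k / √(A⁻¹ k k)) ⬝ᵥ A *ᵥ (fun i => A⁻¹ i k / √(A⁻¹ k k)) = 1 := by
    rw [hw, mulVec_smul, dotProduct_smul, smul_dotProduct, hq, smul_eq_mul, smul_eq_mul,
      ← mul_assoc, ← mul_inv, Real.mul_self_sqrt hc.le, inv_mul_cancel₀ hc.ne']
  rw [columnKL, hk, hq']
  ring

end ColumnKL

theorem klObj_eq_sum_columnKL {N : ℕ} {Θ W : Matrix (Fin N) (Fin N) ℝ} (hΘ : Θ.det ≠ 0)
    (hW : W.IsUpperTriangular) (hWd : ∀ j, W j j ≠ 0) :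
    klObj Θ W = (1 / 2) * (-Real.log Θ.det + ∑ j, columnKL Θ j (Wᵀ j) - N) := by
  have hdet : (Wᵀ * Θ * W).det = Θ.det * ∏ j, W j j ^ 2 := by
    rw [det_mul, det_mul, det_transpose, det_of_isUpperTriangular hW, Finset.prod_pow]
    ring
  have hlog : Real.log (Wᵀ * Θ * W).det = Real.log Θ.det + ∑ j, Real.log (W j j ^ 2) := by
    rw [hdet, Real.log_mul hΘ (Finset.prod_ne_zero_iff.mpr fun j _ => pow_ne_zero 2 (hWd j)),
      Real.log_prod fun j _ => pow_ne_zero 2 (hWd j)]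
  have htr : (Wᵀ * Θ * W).trace = ∑ j, Wᵀ j ⬝ᵥ Θ *ᵥ Wᵀ j := by
    simp only [trace, diag_apply, mul_mul_apply]
  simp only [klObj, columnKL, hlog, htr, Finset.sum_add_distrib, Finset.sum_neg_distrib,
    transpose_apply]
  ring

section OptU

variable {N : ℕ} {Θ : Matrix (Fin N) (Fin N) ℝ} {S : Finset (Fin N × Fin N)} {i j : Fin N}

theorem mem_sset : i ∈ sset S j ↔ (i, j) ∈ S := by
  simp [sset]

theorem lastBasis_eq_single (hj : j ∈ sset S j) : lastBasis S j = Pi.single ⟨j, hj⟩ 1 := by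
  ext q
  simp [lastBasis, Pi.single_apply, Subtype.ext_iff]

theorem subΘ_posDef (hΘ : Θ.PosDef) : (subΘ Θ S j).PosDef :=
  hΘ.submatrix Subtype.val_injective

theorem optU_eq_zero_of_notMem (h : (i, j) ∉ S) : optU Θ S i j = 0 :=
  dif_neg h

theorem optU_apply_sset (hj : j ∈ sset S j) :
    (fun q : sset S j => optU Θ S q j) =
      fun q => (subΘ Θ S j)⁻¹ q ⟨j, hj⟩ / √((subΘ Θ S j)⁻¹ ⟨j, hj⟩ ⟨j, hj⟩) := by
  ext q
  rw [optU, dif_pos (mem_sset.1 q.2), lastBasis_eq_single hj, mulVec_single_one,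
    single_one_dotProduct, col_apply, col_apply]

theorem optU_apply_self_pos (hΘ : Θ.PosDef) (hj : (j, j) ∈ S) : 0 < optU Θ S j j := by
  have hjs : j ∈ sset S j := mem_sset.2 hj
  have h := congrFun (optU_apply_sset (Θ := Θ) hjs) ⟨j, hjs⟩
  dsimp only at h
  rw [h, Real.div_sqrt]
  exact Real.sqrt_pos.2 (subΘ_posDef hΘ).inv.diag_pos

theorem columnKL_optU_le (hΘ : Θ.PosDef) (hj : (j, j) ∈ S) {v : Fin N → ℝ}
    (hv : ∀ i, v i ≠ 0 → (i, j) ∈ S) (hvj : v j ≠ 0) :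
    columnKL Θ j ((optU Θ S)ᵀ j) ≤ columnKL Θ j v := by
  have hjs : j ∈ sset S j := mem_sset.2 hj
  have hA : (subΘ Θ S j).PosDef := subΘ_posDef hΘ
  rw [columnKL_eq_submatrix hjs (w := (optU Θ S)ᵀ j)
      fun i hi => optU_eq_zero_of_notMem (mt mem_sset.2 hi),
    columnKL_eq_submatrix hjs (w := v) fun i hi => by_contra fun h => hi (mem_sset.2 (hv i h))]
  simp only [transpose_apply, optU_apply_sset hjs]
  exact (columnKL_inv_col_div_sqrt hA _).trans_le (le_columnKL hA hvj)

end OptU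

/-- Among all (nondegenerate) upper triangular matrices supported on an upper-triangular
sparsity pattern `S` containing the diagonal, the KL divergence
`KL( N(0,Θ) ‖ N(0,(ÛÛᵀ)⁻¹) )` is minimized by the matrix `optU Θ S` whose `j`-th column
is `Θ_{s_j,s_j}⁻¹ e_{#s_j} / sqrt(e_{#s_j}ᵀ Θ_{s_j,s_j}⁻¹ e_{#s_j})` on `s_j`. -/
theorem stmt_7 {N : ℕ} (Θ : Matrix (Fin N) (Fin N) ℝ) (hΘ : Θ.PosDef)
    (S : Finset (Fin N × Fin N))
    (hSut : ∀ p ∈ S, p.1 ≤ p.2)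
    (hSdiag : ∀ j : Fin N, (j, j) ∈ S) :
    ∀ V : Matrix (Fin N) (Fin N) ℝ,
      (∀ i j : Fin N, V i j ≠ 0 → (i, j) ∈ S) →
      (∀ j : Fin N, V j j ≠ 0) →
      klObj Θ (optU Θ S) ≤ klObj Θ V := by
  intro V hVS hVd
  have upper : ∀ W : Matrix (Fin N) (Fin N) ℝ, (∀ i j, W i j ≠ 0 → (i, j) ∈ S) →
      W.IsUpperTriangular := fun W hW i j hji =>
    by_contra fun h => (hSut _ (hW i j h)).not_gt hji
  have hUS : ∀ i j, optU Θ S i j ≠ 0 → (i, j) ∈ S := fun i j h =>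
    by_contra fun hij => h (optU_eq_zero_of_notMem hij)
  rw [klObj_eq_sum_columnKL hΘ.det_pos.ne' (upper _ hUS)
      fun j => (optU_apply_self_pos hΘ (hSdiag j)).ne',
    klObj_eq_sum_columnKL hΘ.det_pos.ne' (upper V hVS) hVd]
  gcongr with j
  exact columnKL_optU_le hΘ (hSdiag j) (hVS · j) (hVd j)
end

section
/- For Θ symmetric positive definite and U upper triangular supported on a sparsity pattern S with column sets s_j, the KL objective decouples over columns: -log det(U^T Θ U) + tr(U^T Θ U) = Σ_{j=1}^N [ -log(U_{s_j,j}^T Θ_{s_j,s_j} U_{s_j,j}) + U_{s_j,j}^T Θ_{s_j,s_j} U_{s_j,j} ]. -/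
open Matrix

/-- Column-wise decoupling of the KL objective: for `Θ` symmetric positive definite and
`U` upper triangular with positive diagonal whose `j`-th column is supported on
`s_j ⊆ {1,…,j}` with `j ∈ s_j`,
`-log det(UᵀΘU) + tr(UᵀΘU) = Σ_j [ -2 log U_jj + U_{s_j,j}ᵀ Θ_{s_j,s_j} U_{s_j,j} ] - log det Θ`,
where `U_{s_j,j}ᵀ Θ_{s_j,s_j} U_{s_j,j} = Σ_{p,q ∈ s_j} U_pj Θ_pq U_qj`
(which also equals `-log(U_{s_j,j}ᵀΘ_{s_j,s_j}U_{s_j,j}) + …` up to the reassembly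
of logarithms used in the paper). -/
theorem stmt_8 {N : ℕ} (Θ U : Matrix (Fin N) (Fin N) ℝ) (hΘ : Θ.PosDef)
    (s : Fin N → Finset (Fin N))
    (hs_sub : ∀ j : Fin N, ∀ i ∈ s j, i ≤ j)
    (hs_mem : ∀ j : Fin N, j ∈ s j)
    (hsupp : ∀ i j : Fin N, U i j ≠ 0 → i ∈ s j)
    (hdiag : ∀ j, 0 < U j j) :
    -Real.log ((Uᵀ * Θ * U).det) + (Uᵀ * Θ * U).trace =
      (∑ j : Fin N,
        (-2 * Real.log (U j j) +
          ∑ p : {x // x ∈ s j}, ∑ q : {x // x ∈ s j},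
            U (p : Fin N) j * Θ (p : Fin N) (q : Fin N) * U (q : Fin N) j))
        - Real.log Θ.det := by
  have hUz : ∀ i j : Fin N, i ∉ s j → U i j = 0 := by
    intro i j h
    by_contra hne
    exact h (hsupp i j hne)
  have hUt : U.BlockTriangular id := by
    intro i j hij
    by_contra hne
    exact absurd (hs_sub j i (hsupp i j hne)) (not_le.mpr hij)
  have hdetU : U.det = ∏ i, U i i := Matrix.det_of_upperTriangular hUt
  have hdetUpos : 0 < U.det := by
    rw [hdetU]; exact Finset.prod_pos (fun i _ => hdiag i)
  have hΘdet : 0 < Θ.det := hΘ.det_pos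
  have hdet : (Uᵀ * Θ * U).det = U.det * U.det * Θ.det := by
    rw [Matrix.det_mul, Matrix.det_mul, Matrix.det_transpose]; ring
  have hlog : Real.log ((Uᵀ * Θ * U).det)
      = 2 * ∑ j, Real.log (U j j) + Real.log Θ.det := by
    rw [hdet, Real.log_mul (by positivity) (ne_of_gt hΘdet),
        Real.log_mul (ne_of_gt hdetUpos) (ne_of_gt hdetUpos), hdetU,
        Real.log_prod (s := Finset.univ) (f := fun i => U i i) (fun i _ => (hdiag i).ne')]
    ring
  have htr : (Uᵀ * Θ * U).trace
      = ∑ j : Fin N, ∑ p : {x // x ∈ s j}, ∑ q : {x // x ∈ s j},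
          U (p : Fin N) j * Θ (p : Fin N) (q : Fin N) * U (q : Fin N) j := by
    rw [Matrix.trace]
    apply Finset.sum_congr rfl
    intro j _
    have hentry : Matrix.diag (Uᵀ * Θ * U) j
        = ∑ p : Fin N, ∑ q : Fin N, U p j * Θ p q * U q j := by
      simp only [Matrix.diag_apply, Matrix.mul_apply, Matrix.transpose_apply,
        Finset.sum_mul, Finset.mul_sum]
      rw [Finset.sum_comm]
    rw [hentry]
    rw [Finset.sum_coe_sort (s j) (fun p => ∑ q : {x // x ∈ s j},
          U (p : Fin N) j * Θ (p : Fin N) (q : Fin N) * U (q : Fin N) j)]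
    rw [← Finset.sum_subset (Finset.subset_univ (s j))
      (fun p _ hp => by
        simp [hUz p j hp])]
    apply Finset.sum_congr rfl
    intro p _
    rw [Finset.sum_coe_sort (s j) (fun q => U p j * Θ p (q : Fin N) * U (q : Fin N) j)]
    rw [← Finset.sum_subset (Finset.subset_univ (s j))
      (fun q _ hq => by simp [hUz q j hq])]
  have h2 : ∑ x : Fin N, -2 * Real.log (U x x) = -2 * ∑ j, Real.log (U j j) :=
    (Finset.mul_sum _ _ _).symm
  rw [hlog, htr, Finset.sum_add_distrib, h2]
  ring
end

section
/- Let {x_i}_{i ∈ I} ⊂ Ω ⊂ R^d be points ordered by the maximin ordering with lengthscales l_j, and for ρ > 0 define s_j = {i ≤ j : dist(x_{P(i)}, x_{P(j)}) ≤ ρ l_j}. Then the cardinality of s_j is O(ρ^d); specifically #s_j is at most the number of disjoint balls of radius l_j/2 that fit in a ball of radius 2ρ l_j + l_j/2, which is at most (4ρ+1)^d. -/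
open Metric MeasureTheory ENNReal Module

/-- Packing lemma: an `l`-separated finite set in the closed ball of radius `R`
has cardinality at most `((2R+l)/l)^dim`. -/
lemma packing_card_le {E : Type*} [NormedAddCommGroup E] [NormedSpace ℝ E]
    [FiniteDimensional ℝ E] (s : Finset E) (l R : ℝ) (hl : 0 < l) (hR : 0 ≤ R)
    (hs : ∀ c ∈ s, ‖c‖ ≤ R) (h : ∀ c ∈ s, ∀ c' ∈ s, c ≠ c' → l ≤ ‖c - c'‖) :
    (s.card : ℝ) ≤ ((2 * R + l) / l) ^ finrank ℝ E := by
  borelize E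
  let μ : Measure E := Measure.addHaar
  set δ : ℝ := l / 2 with hδ
  set ρ : ℝ := R + l / 2 with hρ
  have δpos : 0 < δ := by rw [hδ]; positivity
  have ρpos : 0 < ρ := by rw [hρ]; positivity
  set A := ⋃ c ∈ s, ball (c : E) δ with hA
  have D : Set.Pairwise (s : Set E) (Function.onFun Disjoint fun c => ball (c : E) δ) := by
    rintro c hc c' hc' hcc'
    apply ball_disjoint_ball
    rw [dist_eq_norm]
    have := h c hc c' hc' hcc'
    rw [hδ]; linarith
  have A_subset : A ⊆ ball (0 : E) ρ := by
    refine Set.iUnion₂_subset fun y hy => ?_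
    apply ball_subset_ball'
    rw [dist_zero_right]
    have := hs y hy
    rw [hδ, hρ]; linarith
  have I :
      (s.card : ℝ≥0∞) * ENNReal.ofReal (δ ^ finrank ℝ E) * μ (ball 0 1) ≤
        ENNReal.ofReal (ρ ^ finrank ℝ E) * μ (ball 0 1) :=
    calc
      (s.card : ℝ≥0∞) * ENNReal.ofReal (δ ^ finrank ℝ E) * μ (ball 0 1) = μ A := by
        rw [hA, measure_biUnion_finset D fun c _ => measurableSet_ball]
        simp only [μ.addHaar_ball_of_pos _ δpos]
        simp only [Finset.sum_const, nsmul_eq_mul, mul_assoc]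
      _ ≤ μ (ball (0 : E) ρ) := measure_mono A_subset
      _ = ENNReal.ofReal (ρ ^ finrank ℝ E) * μ (ball 0 1) := by
        simp only [μ.addHaar_ball_of_pos _ ρpos]
  have J : (s.card : ℝ≥0∞) * ENNReal.ofReal (δ ^ finrank ℝ E) ≤
      ENNReal.ofReal (ρ ^ finrank ℝ E) :=
    (ENNReal.mul_le_mul_iff_left (measure_ball_pos _ _ zero_lt_one).ne' measure_ball_lt_top.ne).1 I
  have K := ENNReal.toReal_le_of_le_ofReal (pow_nonneg ρpos.le _) J
  rw [ENNReal.toReal_mul, ENNReal.toReal_ofReal (pow_nonneg δpos.le _)] at K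
  simp only [ENNReal.toReal_natCast] at K
  have hratio : (2 * R + l) / l = ρ / δ := by
    rw [hρ, hδ]
    field_simp
  rw [hratio, div_pow, le_div_iff₀ (by positivity)]
  exact K

/-- Ball-packing bound for the sparsity sets: if the first `j` points in the maximin
ordering have pairwise distances at least `l_j > 0`, then the sparsity set
`s_j = {i ≤ j : dist(x_i, x_j) ≤ ρ l_j}` has cardinality at most `(4ρ+1)^d`
(the number of disjoint balls of radius `l_j/2` fitting in a ball of radius
`2ρ l_j + l_j/2`), in particular `#s_j = O(ρ^d)`. -/
theorem stmt_10 {d M : ℕ} (x : Fin M → EuclideanSpace ℝ (Fin d))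
    (j : Fin M) (l ρ : ℝ) (hl : 0 < l) (hρ : 0 < ρ)
    (hsep : ∀ i i' : Fin M, i ≤ j → i' ≤ j → i ≠ i' → l ≤ dist (x i) (x i')) :
    ((Finset.univ.filter
        (fun i : Fin M => i ≤ j ∧ dist (x i) (x j) ≤ ρ * l)).card : ℝ)
      ≤ (4 * ρ + 1) ^ d := by
  classical
  set t := Finset.univ.filter
      (fun i : Fin M => i ≤ j ∧ dist (x i) (x j) ≤ ρ * l) with ht
  set f : Fin M → EuclideanSpace ℝ (Fin d) := fun i => x i - x j with hf
  have hmem : ∀ i ∈ t, i ≤ j ∧ dist (x i) (x j) ≤ ρ * l := by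
    intro i hi
    rw [ht, Finset.mem_filter] at hi
    exact hi.2
  have hinj : Set.InjOn f t := by
    intro a ha b hb hab
    by_contra hne
    have hx : x a = x b := by
      have : x a - x j = x b - x j := hab
      exact sub_left_injective this
    have := hsep a b (hmem a ha).1 (hmem b hb).1 hne
    rw [hx, dist_self] at this
    linarith
  have hcard : (t.image f).card = t.card := Finset.card_image_of_injOn hinj
  have key := packing_card_le (t.image f) l (ρ * l) hl (by positivity)
    (by
      intro c hc
      rw [Finset.mem_image] at hc
      obtain ⟨i, hi, rfl⟩ := hc
      have := (hmem i hi).2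
      simpa [hf, ← dist_eq_norm] using this)
    (by
      intro c hc c' hc' hcc'
      rw [Finset.mem_image] at hc hc'
      obtain ⟨i, hi, rfl⟩ := hc
      obtain ⟨i', hi', rfl⟩ := hc'
      have hne : i ≠ i' := by rintro rfl; exact hcc' rfl
      have := hsep i i' (hmem i hi).1 (hmem i' hi').1 hne
      calc l ≤ dist (x i) (x i') := this
        _ = ‖f i - f i'‖ := by rw [hf, dist_eq_norm]; simp [sub_sub_sub_cancel_right]
        )
  rw [hcard, finrank_euclideanSpace_fin] at key
  refine key.trans (pow_le_pow_left₀ (by positivity) ?_ d)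
  rw [div_le_iff₀ hl]
  nlinarith [hρ.le, hl.le]
end

section
/- Let Ω ⊂ R^d be bounded, {x_i}_{i∈I} ⊂ Ω with positive homogeneity parameter δ(X_M; ∂Ω) > 0, and let l_j be the maximin lengthscales conditioned on ∂Ω. Then for every j ≤ M, max_{x∈Ω} dist(x, X_{j-1} ∪ ∂Ω) ≤ (1 + 1/δ(X_M; ∂Ω)) · l_j, where X_{j-1} = {x_{P(1)},...,x_{P(j-1)}} consists of the first j-1 points in the maximin ordering. -/
open Metric

/-- Fill-distance bound for maximin prefixes. `x : Fin M → ℝ^d` lists the points in the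
maximin ordering conditioned on `∂Ω`, with lengthscales
`l j = dist(x_j, X_{j-1} ∪ ∂Ω)` where `X_{j-1} = {x_i : i < j}`; the maximin property
says every point ordered at or after `j` is within distance `l j` of `X_{j-1} ∪ ∂Ω`.
If the full point set has homogeneity parameter at least `δ > 0` (i.e.
`δ · dist(p, X_M ∪ ∂Ω) ≤ dist(x_i, {x_{i'}} ∪ ∂Ω)` for all `p ∈ Ω` and `i ≠ i'`),
then for every `j`, `max_{p ∈ Ω} dist(p, X_{j-1} ∪ ∂Ω) ≤ (1 + 1/δ) · l j`. -/
theorem stmt_15 {d M : ℕ} (hM : 2 ≤ M) (Ω : Set (EuclideanSpace ℝ (Fin d)))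
    (hbd : Bornology.IsBounded Ω)
    (x : Fin M → EuclideanSpace ℝ (Fin d)) (hxΩ : ∀ i, x i ∈ Ω)
    (l : Fin M → ℝ) (δ : ℝ) (hδ : 0 < δ)
    (hl : ∀ j : Fin M,
      l j = infDist (x j) ((x '' {i : Fin M | i < j}) ∪ frontier Ω))
    (hmaximin : ∀ j i : Fin M, j ≤ i →
      infDist (x i) ((x '' {i' : Fin M | i' < j}) ∪ frontier Ω) ≤ l j)
    (hhom : ∀ p ∈ Ω, ∀ i i' : Fin M, i ≠ i' →
      δ * infDist p (Set.range x ∪ frontier Ω) ≤ infDist (x i) ({x i'} ∪ frontier Ω)) :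
    ∀ j : Fin M, ∀ p ∈ Ω,
      infDist p ((x '' {i : Fin M | i < j}) ∪ frontier Ω) ≤ (1 + 1 / δ) * l j := by
  intro j p hp
  set F := frontier Ω with hF
  set A : Fin M → Set (EuclideanSpace ℝ (Fin d)) :=
    fun j => (x '' {i : Fin M | i < j}) ∪ F with hA
  set R : Set (EuclideanSpace ℝ (Fin d)) := Set.range x ∪ F with hR
  have hlnn : ∀ j, 0 ≤ l j := fun j => (hl j) ▸ infDist_nonneg
  -- degenerate case: A j empty
  rcases Set.eq_empty_or_nonempty (A j) with hAe | hAne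
  · show infDist p (A j) ≤ _
    rw [hAe]
    simp only [infDist_empty]
    exact mul_nonneg (by positivity) (hlnn j)
  -- the last point
  have hm0 : M - 1 < M := by omega
  set m : Fin M := ⟨M - 1, hm0⟩ with hmdef
  set z : Fin M := ⟨0, by omega⟩ with hzdef
  have hzm : z < m := by
    simp only [hzdef, hmdef, Fin.lt_def]
    omega
  have hjm : j ≤ m := by
    have := j.isLt
    simp only [hmdef, Fin.le_def]
    omega
  have hRne : R.Nonempty := ⟨x z, Or.inl ⟨z, rfl⟩⟩
  -- Step 1: δ * infDist p R ≤ l m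
  have hstep1 : δ * infDist p R ≤ l m := by
    by_contra hcon
    push_neg at hcon
    have hAmne : (A m).Nonempty := ⟨x z, Or.inl ⟨z, hzm, rfl⟩⟩
    have hlt : infDist (x m) (A m) < δ * infDist p R := by
      rw [← hl m]; exact hcon
    rw [infDist_lt_iff hAmne] at hlt
    obtain ⟨q, hq, hqlt⟩ := hlt
    rcases hq with ⟨i', hi', rfl⟩ | hqF
    · have hne : m ≠ i' := (ne_of_lt hi').symm
      have h1 := hhom p hp m i' hne
      have h2 : infDist (x m) ({x i'} ∪ F) ≤ dist (x m) (x i') :=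
        infDist_le_dist_of_mem (Or.inl rfl)
      linarith
    · have hne : m ≠ z := (ne_of_lt hzm).symm
      have h1 := hhom p hp m z hne
      have h2 : infDist (x m) ({x z} ∪ F) ≤ dist (x m) q :=
        infDist_le_dist_of_mem (Or.inr hqF)
      linarith
  -- Step 2: l m ≤ l j
  have hstep2 : l m ≤ l j := by
    have hsub : A j ⊆ A m := by
      apply Set.union_subset_union_left
      apply Set.image_mono
      intro i hi
      exact lt_of_lt_of_le hi hjm
    have h1 : infDist (x m) (A m) ≤ infDist (x m) (A j) :=
      infDist_le_infDist_of_subset hsub hAne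
    have h2 : infDist (x m) (A j) ≤ l j := hmaximin j m hjm
    have h0 : l m = infDist (x m) (A m) := hl m
    linarith
  -- Step 3: infDist p (A j) ≤ infDist p R + l j
  have hstep3 : infDist p (A j) ≤ infDist p R + l j := by
    by_contra hcon
    push_neg at hcon
    have hlt : infDist p R < infDist p (A j) - l j := by linarith
    rw [infDist_lt_iff hRne] at hlt
    obtain ⟨q, hq, hqlt⟩ := hlt
    rcases hq with ⟨i, rfl⟩ | hqF
    · have h1 : infDist p (A j) ≤ infDist (x i) (A j) + dist p (x i) :=
          infDist_le_infDist_add_dist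
      have h2 : infDist (x i) (A j) ≤ l j := by
        rcases lt_or_ge i j with h | h
        · have : infDist (x i) (A j) = 0 :=
            infDist_zero_of_mem (Or.inl ⟨i, h, rfl⟩)
          linarith [hlnn j]
        · exact hmaximin j i h
      linarith
    · have h1 : infDist p (A j) ≤ dist p q :=
        infDist_le_dist_of_mem (Or.inr hqF)
      linarith [hlnn j]
  -- combine
  have hIR : infDist p R ≤ l j / δ := by
    rw [le_div_iff₀ hδ, mul_comm]
    calc δ * infDist p R ≤ l m := hstep1
      _ ≤ l j := hstep2
  calc infDist p ((x '' {i : Fin M | i < j}) ∪ frontier Ω) = infDist p (A j) := rfl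
    _ ≤ infDist p R + l j := hstep3
    _ ≤ l j / δ + l j := by linarith
    _ = (1 + 1 / δ) * l j := by field_simp; ring
end

section
/- Under the maximin ordering conditioned on ∂Ω of homogeneously distributed points (δ(X_M; ∂Ω) > 0), the prefix point sets remain homogeneous: for every j ≤ M, δ(X_{j-1}; ∂Ω) ≥ 1/(1 + 1/δ(X_M; ∂Ω)) > 0. -/
open Metric


private lemma my_le_infDist {a : Type*} [MetricSpace a] {s : Set a} {x : a} {b : Real}
    (hs : s.Nonempty) (h : forall y, y ∈ s -> b <= dist x y) : b <= Metric.infDist x s := by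
  by_contra hc
  push_neg at hc
  obtain ⟨y, hy, hlt⟩ := (Metric.infDist_lt_iff hs).mp hc
  exact (h y hy).not_gt hlt

/-- Prefix homogeneity under the maximin ordering conditioned on `∂Ω`: if the full point
set `X_M` has homogeneity parameter at least `δ > 0`, then every prefix
`X_{j-1} = {x_i : i < j}` has homogeneity parameter at least `1/(1 + 1/δ) > 0`, i.e. for
all `p ∈ Ω` and all distinct `i, i' < j`,
`(1/(1+1/δ)) · dist(p, X_{j-1} ∪ ∂Ω) ≤ dist(x_i, {x_{i'}} ∪ ∂Ω)`. -/
theorem stmt_16 {d M : ℕ} (hM : 2 ≤ M) (Ω : Set (EuclideanSpace ℝ (Fin d)))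
    (hbd : Bornology.IsBounded Ω)
    (x : Fin M → EuclideanSpace ℝ (Fin d)) (hxΩ : ∀ i, x i ∈ Ω)
    (l : Fin M → ℝ) (δ : ℝ) (hδ : 0 < δ)
    (hl : ∀ j : Fin M,
      l j = infDist (x j) ((x '' {i : Fin M | i < j}) ∪ frontier Ω))
    (hmaximin : ∀ j i : Fin M, j ≤ i →
      infDist (x i) ((x '' {i' : Fin M | i' < j}) ∪ frontier Ω) ≤ l j)
    (hhom : ∀ p ∈ Ω, ∀ i i' : Fin M, i ≠ i' →
      δ * infDist p (Set.range x ∪ frontier Ω) ≤ infDist (x i) ({x i'} ∪ frontier Ω)) :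
    ∀ j : Fin M, ∀ p ∈ Ω, ∀ i i' : Fin M, i < j → i' < j → i ≠ i' →
      (1 / (1 + 1 / δ)) * infDist p ((x '' {k : Fin M | k < j}) ∪ frontier Ω)
        ≤ infDist (x i) ({x i'} ∪ frontier Ω) := by
  intro j p hp i i' hij hi'j hii'
  have lnonneg : ∀ a : Fin M, 0 ≤ l a := fun a => (hl a) ▸ infDist_nonneg
  -- monotonicity of l
  have lmono : ∀ a b : Fin M, a ≤ b →
      ((x '' {k : Fin M | k < a}) ∪ frontier Ω).Nonempty → l b ≤ l a := by
    intro a b hab hne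
    rw [hl b]
    calc infDist (x b) ((x '' {k : Fin M | k < b}) ∪ frontier Ω)
        ≤ infDist (x b) ((x '' {k : Fin M | k < a}) ∪ frontier Ω) := by
          refine infDist_le_infDist_of_subset ?_ hne
          exact Set.union_subset_union_left _
            (Set.image_mono (fun k hk => lt_of_lt_of_le hk hab))
      _ ≤ l a := hmaximin a b hab
  set D := infDist (x i) ({x i'} ∪ frontier Ω) with hD
  have hDnn : 0 ≤ D := infDist_nonneg
  -- l j ≤ D
  have hljD : l j ≤ D := by
    rcases lt_or_gt_of_ne hii' with h | h
    · -- i < i'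
      have h1 : l i' ≤ D := by
        rw [hl i']
        refine my_le_infDist ⟨x i', Or.inl rfl⟩ ?_
        rintro y (rfl | hy)
        · rw [dist_comm]
          exact infDist_le_dist_of_mem (Or.inl ⟨i, h, rfl⟩)
        · have h2 : l i' ≤ l i :=
            lmono i i' h.le ⟨y, Or.inr hy⟩
          rw [← hl i']
          calc l i' ≤ l i := h2
            _ ≤ dist (x i) y := by
              rw [hl i]; exact infDist_le_dist_of_mem (Or.inr hy)
      have h2 : l j ≤ l i' := lmono i' j hi'j.le ⟨x i, Or.inl ⟨i, h, rfl⟩⟩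
      linarith
    · -- i' < i
      have h1 : l i ≤ D := by
        rw [hl i]
        refine infDist_le_infDist_of_subset ?_ ⟨x i', Or.inl rfl⟩
        rintro y (rfl | hy)
        · exact Or.inl ⟨i', h, rfl⟩
        · exact Or.inr hy
      have h2 : l j ≤ l i := lmono i j hij.le ⟨x i', Or.inl ⟨i', h, rfl⟩⟩
      linarith
  -- infDist p X_{<j} ≤ infDist p (range x ∪ ∂Ω) + l j
  have hA : infDist p ((x '' {k : Fin M | k < j}) ∪ frontier Ω)
      ≤ infDist p (Set.range x ∪ frontier Ω) + l j := by
    have hne : (Set.range x ∪ frontier Ω).Nonempty := ⟨x i, Or.inl ⟨i, rfl⟩⟩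
    have key : ∀ y ∈ Set.range x ∪ frontier Ω,
        infDist p ((x '' {k : Fin M | k < j}) ∪ frontier Ω) - l j ≤ dist p y := by
      rintro y (⟨k, rfl⟩ | hy)
      · rcases le_or_gt j k with hk | hk
        · have := infDist_le_infDist_add_dist (y := x k)
            (s := (x '' {m : Fin M | m < j}) ∪ frontier Ω) (x := p)
          have h2 := hmaximin j k hk
          linarith
        · have : infDist p ((x '' {m : Fin M | m < j}) ∪ frontier Ω) ≤ dist p (x k) :=
            infDist_le_dist_of_mem (Or.inl ⟨k, hk, rfl⟩)
          linarith [lnonneg j]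
      · have : infDist p ((x '' {m : Fin M | m < j}) ∪ frontier Ω) ≤ dist p y :=
          infDist_le_dist_of_mem (Or.inr hy)
        linarith [lnonneg j]
    have := my_le_infDist hne key
    linarith
  have hB : infDist p (Set.range x ∪ frontier Ω) ≤ D / δ := by
    rw [le_div_iff₀ hδ]
    have := hhom p hp i i' hii'
    linarith [mul_comm δ (infDist p (Set.range x ∪ frontier Ω))]
  have hpos : 0 < 1 + 1 / δ := by positivity
  rw [one_div, inv_mul_le_iff₀ hpos]
  have : D / δ + D ≤ (1 + 1 / δ) * D := by
    rw [div_eq_mul_inv, one_div]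
    ring_nf
    linarith
  linarith
end
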